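/- arXiv:2108.00219 — 2 statements merged into one kernel-verified Lean document; each statement's English description precedes it below -/
import Mathlib

section
/- The NN-diversity function $D_{NN}(S) = \sum_{u \in V} \big(d_{max} - \min_{v \in \sigma(S)} d(u, v)\big)$ is submodular: for all $S \subseteq T$ with $\sigma(S) \neq \emptyset$ and $x \notin T$, $D_{NN}(S \cup \{x\}) - D_{NN}(S) \ge D_{NN}(T \cup \{x\}) - D_{NN}(T)$. -/
/-!
Write `m_A(u)` for the distance from `u` to `σ(A)`. Since `σ(A ∪ {x}) = σ({x}) ∪ σ(A)`, we have
`m_{A ∪ {x}}(u) = min (m_{x}(u)) (m_A(u))`, so the gain of adding `x` at `u` is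
`m_A(u) - min (m_{x}(u)) (m_A(u)) = (m_A(u) - m_{x}(u))⁺`. This is monotone in `m_A(u)`, which
in turn is antitone in `A` because `σ` is monotone; summing over `u` gives submodularity
(`d_max` cancels).
-/

open Finset

theorem sub_inf_le_sub_inf_of_le {α : Type*} [AddCommGroup α] [LinearOrder α]
    [IsOrderedAddMonoid α] (a : α) {b c : α} (h : b ≤ c) : b - a ⊓ b ≤ c - a ⊓ c := by
  rcases le_total a b with hab | hba
  · rw [inf_eq_left.mpr hab, inf_eq_left.mpr (hab.trans h)]
    exact sub_le_sub_right h a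
  · rw [inf_eq_right.mpr hba, sub_self]
    exact sub_nonneg.mpr inf_le_right

theorem Finset.inf'_insert_of_map_union {α γ β : Type*} [DecidableEq α] [DecidableEq γ]
    [SemilatticeInf β] {σ : Finset α → Finset γ} (hunion : ∀ S T, σ (S ∪ T) = σ S ∪ σ T)
    (x : α) (S : Finset α) (hx : (σ {x}).Nonempty) (hS : (σ S).Nonempty)
    (h : (σ (insert x S)).Nonempty) (f : γ → β) :
    (σ (insert x S)).inf' h f = (σ {x}).inf' hx f ⊓ (σ S).inf' hS f := by
  simp only [insert_eq, hunion]
  exact inf'_union hx hS f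

theorem dnn_submodular_general {V : Type*} [Fintype V] [DecidableEq V]
    (d : V → V → ℝ) (σ : Finset V → Finset V)
    (hmono : ∀ ⦃S T : Finset V⦄, S ⊆ T → σ S ⊆ σ T)
    (hunion : ∀ S T : Finset V, σ (S ∪ T) = σ S ∪ σ T)
    (hsing : ∀ x : V, (σ {x}).Nonempty)
    (dmax : ℝ)
    (S T : Finset V) (hST : S ⊆ T) (x : V) (hS : (σ S).Nonempty) :
    (∑ u : V, (dmax - (σ (insert x T)).inf'
          ((hS.mono (hmono hST)).mono (hmono (subset_insert x T))) (fun v => d u v)) -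
        ∑ u : V, (dmax - (σ T).inf' (hS.mono (hmono hST)) (fun v => d u v))) ≤
      (∑ u : V, (dmax - (σ (insert x S)).inf'
          (hS.mono (hmono (subset_insert x S))) (fun v => d u v)) -
        ∑ u : V, (dmax - (σ S).inf' hS (fun v => d u v))) := by
  have hT : (σ T).Nonempty := hS.mono (hmono hST)
  simp only [← sum_sub_distrib, sub_sub_sub_cancel_left]
  refine sum_le_sum fun u _ => ?_
  rw [inf'_insert_of_map_union hunion x S (hsing x) hS,
    inf'_insert_of_map_union hunion x T (hsing x) hT]
  exact sub_inf_le_sub_inf_of_le _ (inf'_mono _ (hmono hST) hS)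

/-- Submodularity part of Theorem 2 in GRAIN: the NN-diversity function
`D_NN(S) = ∑_{u ∈ V} (d_max - min_{v ∈ σ(S)} d(u,v))` is submodular. -/
theorem dnn_submodular {V : Type*} [Fintype V] [DecidableEq V] [Nonempty V]
    (d : V → V → ℝ) (hd : ∀ u v, 0 ≤ d u v) (σ : Finset V → Finset V)
    (hmono : ∀ ⦃S T : Finset V⦄, S ⊆ T → σ S ⊆ σ T)
    (hunion : ∀ S T : Finset V, σ (S ∪ T) = σ S ∪ σ T)
    (hsing : ∀ x : V, (σ {x}).Nonempty)
    (dmax : ℝ)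
    (hdmax : dmax = Finset.univ.sup' Finset.univ_nonempty (fun p : V × V => d p.1 p.2))
    (S T : Finset V) (hST : S ⊆ T) (x : V) (hx : x ∉ T) (hS : (σ S).Nonempty) :
    (∑ u : V, (dmax - (σ (insert x T)).inf'
          ((hS.mono (hmono hST)).mono (hmono (subset_insert x T))) (fun v => d u v)) -
        ∑ u : V, (dmax - (σ T).inf' (hS.mono (hmono hST)) (fun v => d u v))) ≤
      (∑ u : V, (dmax - (σ (insert x S)).inf'
          (hS.mono (hmono (subset_insert x S))) (fun v => d u v)) -
        ∑ u : V, (dmax - (σ S).inf' hS (fun v => d u v))) :=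
  dnn_submodular_general d σ hmono hunion hsing dmax S T hST x hS
end

section
/- Greedy approximation guarantee: let $F : \mathcal{P}(V) \to \mathbb{R}_{\ge 0}$ be monotone, submodular, with $F(\emptyset) = 0$. The greedy algorithm that at each of $B$ steps adds the element with the largest marginal gain produces a set $S$ with $F(S) \ge (1 - 1/e) \max_{|S^*| = B} F(S^*)$. -/
/-!
Let `Sᵢ` be the greedy set after `i` steps and `S*` any set of size `B`. By monotonicity and
submodularity, `F S* ≤ F (Sᵢ ∪ S*) ≤ F Sᵢ + ∑_{y ∈ S*} (F (insert y Sᵢ) - F Sᵢ)`, and each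
marginal gain is at most the greedy one, so `F S* - F Sᵢ ≤ B (F Sᵢ₊₁ - F Sᵢ)`. Hence the gap
`F S* - F Sᵢ` shrinks by a factor `1 - 1/B` per step, and after `B` steps it is at most
`(1 - 1/B)^B F S* ≤ e⁻¹ F S*`.
-/

open Finset

section Submodular

variable {α : Type*} [DecidableEq α]

def IsSubmodular (F : Finset α → ℝ) : Prop :=
  ∀ (S T : Finset α) (x : α), S ⊆ T → x ∉ T → F (insert x T) - F T ≤ F (insert x S) - F S

variable {F : Finset α → ℝ}

lemma Monotone.apply_insert_sub_apply_nonneg (hmono : Monotone F) (S : Finset α) (x : α) :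
    0 ≤ F (insert x S) - F S :=
  sub_nonneg.mpr (hmono (subset_insert x S))

lemma IsSubmodular.apply_union_le_add_sum (hsub : IsSubmodular F) (hmono : Monotone F)
    (S T : Finset α) : F (S ∪ T) ≤ F S + ∑ x ∈ T, (F (insert x S) - F S) := by
  induction T using Finset.induction with
  | empty => simp
  | @insert a T ha ih =>
    have hgain : F (insert a (S ∪ T)) - F (S ∪ T) ≤ F (insert a S) - F S := by
      by_cases haST : a ∈ S ∪ T
      · rw [insert_eq_self.mpr haST, sub_self]
        exact hmono.apply_insert_sub_apply_nonneg S a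
      · exact hsub S (S ∪ T) a subset_union_left haST
    rw [union_insert, sum_insert ha]
    linarith

lemma IsSubmodular.sub_le_card_mul_of_forall_le (hsub : IsSubmodular F) (hmono : Monotone F)
    {S : Finset α} {x : α} (hmax : ∀ y ∉ S, F (insert y S) ≤ F (insert x S)) (T : Finset α) :
    F T - F S ≤ #T * (F (insert x S) - F S) := by
  have hgain : ∀ y ∈ T, F (insert y S) - F S ≤ F (insert x S) - F S := by
    intro y _
    by_cases hy : y ∈ S
    · rw [insert_eq_self.mpr hy, sub_self]
      exact hmono.apply_insert_sub_apply_nonneg S x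
    · exact sub_le_sub_right (hmax y hy) _
  calc F T - F S ≤ F (S ∪ T) - F S := sub_le_sub_right (hmono subset_union_right) _
    _ ≤ ∑ y ∈ T, (F (insert y S) - F S) := by
      linarith [hsub.apply_union_le_add_sum hmono S T]
    _ ≤ ∑ _y ∈ T, (F (insert x S) - F S) := sum_le_sum hgain
    _ = #T * (F (insert x S) - F S) := by rw [sum_const, nsmul_eq_mul]

end Submodular

section Recurrence

variable {a : ℕ → ℝ} {opt : ℝ} {n : ℕ}

lemma sub_le_one_sub_inv_pow_mul (hgap : ∀ i < n, opt - a i ≤ n * (a (i + 1) - a i)) :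
    ∀ i ≤ n, opt - a i ≤ (1 - 1 / n) ^ i * (opt - a 0) := by
  intro i hi
  induction i with
  | zero => simp
  | succ i ih =>
    have hin : i < n := hi
    have hn1 : (1 : ℝ) ≤ n := by exact_mod_cast Nat.one_le_of_lt hin
    have hn : (0 : ℝ) < n := zero_lt_one.trans_le hn1
    have hr : 0 ≤ 1 - 1 / (n : ℝ) := by rwa [sub_nonneg, div_le_one hn]
    have hstep : opt - a (i + 1) ≤ (1 - 1 / n) * (opt - a i) := by
      have : (opt - a i) / n ≤ a (i + 1) - a i := (div_le_iff₀' hn).mpr (hgap i hin)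
      rw [one_sub_mul, one_div_mul_eq_div]
      linarith
    calc opt - a (i + 1) ≤ (1 - 1 / n) * (opt - a i) := hstep
      _ ≤ (1 - 1 / n) * ((1 - 1 / n) ^ i * (opt - a 0)) :=
        mul_le_mul_of_nonneg_left (ih hin.le) hr
      _ = (1 - 1 / n) ^ (i + 1) * (opt - a 0) := by ring

lemma one_sub_exp_neg_one_mul_le (hn : 0 < n) (hopt : a 0 ≤ opt)
    (hgap : ∀ i < n, opt - a i ≤ n * (a (i + 1) - a i)) :
    (1 - (Real.exp 1)⁻¹) * (opt - a 0) ≤ a n - a 0 := by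
  have hpow : (1 - 1 / (n : ℝ)) ^ n ≤ (Real.exp 1)⁻¹ := by
    rw [← Real.exp_neg]
    exact Real.one_sub_div_pow_le_exp_neg (by exact_mod_cast hn)
  have := sub_le_one_sub_inv_pow_mul hgap n le_rfl
  linarith [mul_le_mul_of_nonneg_right hpow (sub_nonneg.mpr hopt)]

end Recurrence

theorem greedy_approximation_general {V : Type*} [DecidableEq V]
    (F : Finset V → ℝ)
    (hmono : ∀ S T : Finset V, S ⊆ T → F S ≤ F T)
    (hsub : ∀ (S T : Finset V) (x : V), S ⊆ T → x ∉ T →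
      F (insert x T) - F T ≤ F (insert x S) - F S)
    (h0 : F ∅ = 0)
    (B : ℕ)
    (g : ℕ → Finset V) (hg0 : g 0 = ∅)
    (hstep : ∀ i < B, ∃ x ∉ g i, g (i + 1) = insert x (g i) ∧
      ∀ y ∉ g i, F (insert y (g i)) ≤ F (insert x (g i)))
    (Sstar : Finset V) (hcard : Sstar.card = B) :
    (1 - (Real.exp 1)⁻¹) * F Sstar ≤ F (g B) := by
  have hmono' : Monotone F := fun S T => hmono S T
  obtain rfl | hB := B.eq_zero_or_pos
  · rw [card_eq_zero.mp hcard, hg0, h0, mul_zero]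
  have hgap : ∀ i < B, F Sstar - F (g i) ≤ B * (F (g (i + 1)) - F (g i)) := by
    intro i hi
    obtain ⟨x, -, hgx, hmax⟩ := hstep i hi
    rw [hgx, ← hcard]
    exact IsSubmodular.sub_le_card_mul_of_forall_le hsub hmono' hmax Sstar
  have hopt : F (g 0) ≤ F Sstar := hg0 ▸ hmono _ _ (empty_subset _)
  simpa [hg0, h0] using one_sub_exp_neg_one_mul_le hB hopt hgap

/-- Nemhauser–Wolsey–Fisher greedy guarantee: for a monotone submodular, nonnegative set
function `F` with `F ∅ = 0`, the greedy algorithm with budget `B` produces a set whose value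
is at least `(1 - 1/e)` times the optimum over all sets of size `B`. -/
theorem greedy_approximation {V : Type*} [Fintype V] [DecidableEq V]
    (F : Finset V → ℝ) (hnn : ∀ S, 0 ≤ F S)
    (hmono : ∀ S T : Finset V, S ⊆ T → F S ≤ F T)
    (hsub : ∀ (S T : Finset V) (x : V), S ⊆ T → x ∉ T →
      F (insert x T) - F T ≤ F (insert x S) - F S)
    (h0 : F ∅ = 0)
    (B : ℕ) (hB : B ≤ Fintype.card V)
    (g : ℕ → Finset V) (hg0 : g 0 = ∅)
    (hstep : ∀ i < B, ∃ x ∉ g i, g (i + 1) = insert x (g i) ∧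
      ∀ y ∉ g i, F (insert y (g i)) ≤ F (insert x (g i)))
    (Sstar : Finset V) (hcard : Sstar.card = B) :
    (1 - (Real.exp 1)⁻¹) * F Sstar ≤ F (g B) :=
  greedy_approximation_general F hmono hsub h0 B g hg0 hstep Sstar hcard
end
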